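/- arXiv:1410.3179 — 4 statements merged into one kernel-verified Lean document; each statement's English description precedes it below -/
import Mathlib

section
/- Let d > 0, b0 > d, m ≥ 0, and Λ(λ, c) = λ² − cλ − d + b0·e^{−λm}. There exists c > 0 such that Λ(λ, c) < 0 for some λ > 0; specifically, if c > 0 is sufficiently large then Λ(2(b0 − d)/c, c) < 0. -/
/-
With λ = 2(b₀ - d)/c we have cλ = 2(b₀ - d), and since b₀ e^{-λm} ≤ b₀ this gives
Λ(λ, c) ≤ λ² - (b₀ - d), which is negative as soon as λ < √(b₀ - d), i.e. c > 2√(b₀ - d).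
-/

open Real

lemma sq_div_lt_of_two_mul_sqrt_lt {B c : ℝ} (hB : 0 < B) (hc : 2 * √B < c) :
    (2 * B / c) ^ 2 < B := by
  have hc0 : 0 < c := lt_of_le_of_lt (by positivity) hc
  have hsq : 4 * B < c ^ 2 := by
    calc 4 * B = (2 * √B) ^ 2 := by rw [mul_pow, sq_sqrt hB.le]; norm_num
      _ < c ^ 2 := by gcongr
  rw [div_pow, div_lt_iff₀ (by positivity)]
  nlinarith

lemma sq_sub_mul_add_mul_exp_lt_zero {d b0 m l c : ℝ} (hb0 : 0 ≤ b0) (hm : 0 ≤ m) (hl : 0 < l)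
    (hcl : c * l = 2 * (b0 - d)) (hl2 : l ^ 2 < b0 - d) :
    l ^ 2 - c * l - d + b0 * exp (-l * m) < 0 := by
  have hexp : exp (-l * m) ≤ 1 := exp_le_one_iff.mpr (by nlinarith)
  nlinarith [mul_le_mul_of_nonneg_left hexp hb0]

theorem stmt_2 (d b0 m : ℝ) (hd : 0 < d) (hb0 : d < b0) (hm : 0 ≤ m)
    (Λ : ℝ → ℝ → ℝ)
    (hΛ : ∀ l c, Λ l c = l ^ 2 - c * l - d + b0 * Real.exp (-l * m)) :
    (∃ c > 0, ∃ l > 0, Λ l c < 0) ∧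
    ∃ C > 0, ∀ c : ℝ, C < c → Λ (2 * (b0 - d) / c) c < 0 := by
  have hB : 0 < b0 - d := by linarith
  have hsB : 0 < √(b0 - d) := sqrt_pos.mpr hB
  have large_c : ∀ c : ℝ, 2 * √(b0 - d) < c → Λ (2 * (b0 - d) / c) c < 0 := by
    intro c hc
    have hc0 : 0 < c := by linarith
    rw [hΛ]
    exact sq_sub_mul_add_mul_exp_lt_zero (by linarith) hm (by positivity)
      (by field_simp) (sq_div_lt_of_two_mul_sqrt_lt hB hc)
  refine ⟨⟨2 * √(b0 - d) + 1, by positivity, 2 * (b0 - d) / (2 * √(b0 - d) + 1), by positivity,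
    large_c _ (by linarith)⟩, 2 * √(b0 - d), by positivity, large_c⟩
end

section
/- Let d > 0, b0 > d, m ≥ 0, and for each c such that Λ(·, c) = λ² − cλ − d + b0·e^{−λm} has a zero in (0, ∞), let λ1(c) denote its smallest positive zero. Then there exist constants L1, L2 > 0 such that c·λ1(c) < L1 and λ1(c) < L2 for all such c. -/
/-!
From `Λ(λ₁, c) = 0` and `b₀ e^{-λ₁ m} ≤ b₀` one gets `c λ₁ ≤ λ₁² + b₀ - d`, so it suffices to
bound `λ₁` uniformly. For `c ≤ b₀ - d + 1` the same equation gives `λ₁² ≤ c λ₁ + d`, hence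
`λ₁ < c + d + 1 ≤ b₀ + 2`. For larger `c`, `Λ(0, c) = b₀ - d > 0` while
`Λ((b₀ - d + 1)/c, c) < 0`, so by the intermediate value theorem there is a zero in
`(0, (b₀ - d + 1)/c]`, and the smallest one is below `1`.
-/

open Real Set

noncomputable section

def dispersionFn (d b0 m l c : ℝ) : ℝ := l ^ 2 - c * l - d + b0 * exp (-l * m)

lemma lt_add_add_one_of_sq_le {l c d : ℝ} (hc : 0 ≤ c) (hd : 0 ≤ d) (h : l ^ 2 ≤ c * l + d) :
    l < c + d + 1 := by
  nlinarith

namespace dispersionFn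

variable {d b0 m l c : ℝ}

lemma continuous_left (d b0 m c : ℝ) : Continuous fun l => dispersionFn d b0 m l c := by
  unfold dispersionFn
  fun_prop

lemma zero_left (d b0 m c : ℝ) : dispersionFn d b0 m 0 c = b0 - d := by
  simp [dispersionFn]
  ring

lemma le_sq_sub_mul_add (hm : 0 ≤ m) (hb0 : 0 ≤ b0) (hl : 0 ≤ l) :
    dispersionFn d b0 m l c ≤ l ^ 2 - c * l + (b0 - d) := by
  have hexp : exp (-l * m) ≤ 1 := Real.exp_le_one_iff.mpr (by nlinarith)
  unfold dispersionFn
  nlinarith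

lemma mul_le_of_eq_zero (hm : 0 ≤ m) (hb0 : 0 ≤ b0) (hl : 0 ≤ l)
    (h : dispersionFn d b0 m l c = 0) : c * l ≤ l ^ 2 + (b0 - d) := by
  linarith [le_sq_sub_mul_add (c := c) (d := d) hm hb0 hl]

lemma sq_le_of_eq_zero (hb0 : 0 ≤ b0) (h : dispersionFn d b0 m l c = 0) :
    l ^ 2 ≤ c * l + d := by
  unfold dispersionFn at h
  nlinarith [exp_pos (-l * m)]

lemma lt_zero_at_div (hm : 0 ≤ m) (hb0 : 0 ≤ b0) (hbd : d < b0) (hc : b0 - d + 1 < c) :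
    dispersionFn d b0 m ((b0 - d + 1) / c) c < 0 := by
  have hc0 : 0 < c := by linarith
  set l := (b0 - d + 1) / c
  have hl : 0 < l := div_pos (by linarith) hc0
  have hcl : c * l = b0 - d + 1 := mul_div_cancel₀ _ hc0.ne'
  have hl1 : l < 1 := (div_lt_one hc0).mpr hc
  nlinarith [le_sq_sub_mul_add (c := c) (d := d) hm hb0 hl.le]

lemma exists_root_mem_Ioc (hm : 0 ≤ m) (hb0 : 0 ≤ b0) (hbd : d < b0) (hc : b0 - d + 1 < c) :
    ∃ z ∈ Ioc 0 ((b0 - d + 1) / c), dispersionFn d b0 m z c = 0 := by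
  set l := (b0 - d + 1) / c
  have hl : 0 < l := div_pos (by linarith) (by linarith)
  obtain ⟨z, hz, hfz⟩ := intermediate_value_Icc' hl.le (continuous_left d b0 m c).continuousOn
    ⟨(lt_zero_at_div hm hb0 hbd hc).le, by rw [zero_left]; linarith⟩
  refine ⟨z, ⟨lt_of_le_of_ne hz.1 ?_, hz.2⟩, hfz⟩
  rintro rfl
  simp only [zero_left] at hfz
  linarith

lemma lt_add_two_of_le_pos_roots {l1 : ℝ} (hd : 0 < d) (hb0 : d < b0) (hm : 0 ≤ m) (hc : 0 < c)
    (hzero : dispersionFn d b0 m l1 c = 0)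
    (hmin : ∀ l, 0 < l → dispersionFn d b0 m l c = 0 → l1 ≤ l) : l1 < b0 + 2 := by
  have hb0' : 0 ≤ b0 := by linarith
  by_cases hlarge : b0 - d + 1 < c
  · obtain ⟨z, ⟨hz0, hzl⟩, hfz⟩ := exists_root_mem_Ioc hm hb0' hb0 hlarge
    have : (b0 - d + 1) / c < 1 := (div_lt_one hc).mpr hlarge
    linarith [hmin z hz0 hfz]
  · have := lt_add_add_one_of_sq_le hc.le hd.le (sq_le_of_eq_zero hb0' hzero)
    linarith

end dispersionFn

theorem stmt_6 (d b0 m : ℝ) (hd : 0 < d) (hb0 : d < b0) (hm : 0 ≤ m)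
    (Λ : ℝ → ℝ → ℝ)
    (hΛ : ∀ l c, Λ l c = l ^ 2 - c * l - d + b0 * Real.exp (-l * m)) :
    ∃ L1 > 0, ∃ L2 > 0, ∀ c > 0, ∀ l1 : ℝ, 0 < l1 → Λ l1 c = 0 →
      (∀ l, 0 < l → Λ l c = 0 → l1 ≤ l) →
      c * l1 < L1 ∧ l1 < L2 := by
  obtain rfl : Λ = dispersionFn d b0 m := by
    funext l c
    exact hΛ l c
  refine ⟨(b0 + 2) ^ 2 + (b0 - d), by positivity, b0 + 2, by linarith, ?_⟩
  intro c hc l1 hl1 hzero hmin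
  have hlt := dispersionFn.lt_add_two_of_le_pos_roots hd hb0 hm hc hzero hmin
  have hmul := dispersionFn.mul_le_of_eq_zero hm (by linarith) hl1.le hzero
  exact ⟨by nlinarith, hlt⟩
end
end

section
/- Let b : [0, K] → ℝ be C¹ with 0 ≤ b'(u) ≤ b0 on [0, K], and let τ : [0, ∞) → [0, ∞) be C¹ with 0 ≤ τ'(u) ≤ T for u ∈ [0, K]. Let c > 0, and suppose ϕ1, ϕ2 : ℝ → [0, K] are continuous with ϕ2(ξ) ≤ ϕ1(ξ) for all ξ, and both are Lipschitz with Lipschitz constant ℓ/c (i.e. c|ϕi(ξ1) − ϕi(ξ2)| ≤ ℓ|ξ1 − ξ2|). Then for all ξ: b(ϕ1(ξ − cτ(ϕ1(ξ)))) − b(ϕ2(ξ − cτ(ϕ2(ξ)))) ≥ −b0·ℓ·T·(ϕ1(ξ) − ϕ2(ξ)). -/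
/-!
Split the difference at the point `ξ - c τ(ϕ₁ ξ)`: replacing `ϕ₁` by `ϕ₂` there can only lower
`b`, since `b` is nondecreasing. What remains is the change of `b ∘ ϕ₂` caused by moving the delay
from `c τ(ϕ₁ ξ)` to `c τ(ϕ₂ ξ)`; as `b`, `ϕ₂` and `τ` are Lipschitz with constants `b0`, `ℓ / c`
and `T`, it is at most `b0 ℓ T (ϕ₁ ξ - ϕ₂ ξ)`.
-/

open Set

section DerivativeBounds

variable {s : Set ℝ} {f f' : ℝ → ℝ} {C : ℝ}

theorem Convex.abs_image_sub_le_of_hasDerivAt_mem_Icc (hs : Convex ℝ s)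
    (hf : ∀ u ∈ s, HasDerivAt f (f' u) u) (hf' : ∀ u ∈ s, 0 ≤ f' u ∧ f' u ≤ C)
    {x y : ℝ} (hx : x ∈ s) (hy : y ∈ s) : |f y - f x| ≤ C * |y - x| :=
  hs.norm_image_sub_le_of_norm_hasDerivWithin_le (fun u hu => (hf u hu).hasDerivWithinAt)
    (fun u hu => (abs_of_nonneg (hf' u hu).1).trans_le (hf' u hu).2) hx hy

theorem Convex.monotoneOn_of_hasDerivAt_nonneg (hs : Convex ℝ s)
    (hf : ∀ u ∈ s, HasDerivAt f (f' u) u) (hf' : ∀ u ∈ s, 0 ≤ f' u) : MonotoneOn f s :=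
  monotoneOn_of_hasDerivWithinAt_nonneg hs
    (fun u hu => (hf u hu).continuousAt.continuousWithinAt)
    (fun u hu => (hf u (interior_subset hu)).hasDerivWithinAt)
    (fun u hu => hf' u (interior_subset hu))

end DerivativeBounds

theorem abs_sub_delay_le {φ : ℝ → ℝ} {c ℓ : ℝ} (hc : 0 < c)
    (hφ : ∀ x y, c * |φ x - φ y| ≤ ℓ * |x - y|) (ξ r t : ℝ) :
    |φ (ξ - c * r) - φ (ξ - c * t)| ≤ ℓ * |r - t| := by
  have h := hφ (ξ - c * r) (ξ - c * t)
  rw [show ξ - c * r - (ξ - c * t) = c * (t - r) by ring, abs_mul, abs_of_pos hc,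
    abs_sub_comm t r, mul_left_comm] at h
  exact le_of_mul_le_mul_left h hc

theorem sub_comp_delay_ge {s : Set ℝ} {b τ ϕ₁ ϕ₂ : ℝ → ℝ} {b0 T c ℓ : ℝ}
    (hb0 : 0 ≤ b0) (hℓ : 0 ≤ ℓ) (hc : 0 < c) (hb_mono : MonotoneOn b s)
    (hb_lip : ∀ x ∈ s, ∀ y ∈ s, |b y - b x| ≤ b0 * |y - x|)
    (hτ_lip : ∀ x ∈ s, ∀ y ∈ s, |τ y - τ x| ≤ T * |y - x|)
    (hϕ₁ : ∀ ξ, ϕ₁ ξ ∈ s) (hϕ₂ : ∀ ξ, ϕ₂ ξ ∈ s) (hle : ∀ ξ, ϕ₂ ξ ≤ ϕ₁ ξ)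
    (hϕ₂_lip : ∀ x y, c * |ϕ₂ x - ϕ₂ y| ≤ ℓ * |x - y|) (ξ : ℝ) :
    -(b0 * ℓ * T) * (ϕ₁ ξ - ϕ₂ ξ) ≤
      b (ϕ₁ (ξ - c * τ (ϕ₁ ξ))) - b (ϕ₂ (ξ - c * τ (ϕ₂ ξ))) := by
  set A := ξ - c * τ (ϕ₁ ξ)
  set B := ξ - c * τ (ϕ₂ ξ)
  have h_mono : b (ϕ₂ A) ≤ b (ϕ₁ A) := hb_mono (hϕ₂ A) (hϕ₁ A) (hle A)
  have h_delay : |τ (ϕ₁ ξ) - τ (ϕ₂ ξ)| ≤ T * (ϕ₁ ξ - ϕ₂ ξ) := by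
    simpa only [abs_of_nonneg (sub_nonneg.2 (hle ξ))] using hτ_lip _ (hϕ₂ ξ) _ (hϕ₁ ξ)
  have h_shift : |b (ϕ₂ A) - b (ϕ₂ B)| ≤ b0 * ℓ * T * (ϕ₁ ξ - ϕ₂ ξ) :=
    calc |b (ϕ₂ A) - b (ϕ₂ B)| ≤ b0 * |ϕ₂ A - ϕ₂ B| := hb_lip _ (hϕ₂ B) _ (hϕ₂ A)
      _ ≤ b0 * (ℓ * |τ (ϕ₁ ξ) - τ (ϕ₂ ξ)|) := by gcongr; exact abs_sub_delay_le hc hϕ₂_lip ξ _ _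
      _ ≤ b0 * (ℓ * (T * (ϕ₁ ξ - ϕ₂ ξ))) := by gcongr
      _ = b0 * ℓ * T * (ϕ₁ ξ - ϕ₂ ξ) := by ring
  linarith [neg_abs_le (b (ϕ₂ A) - b (ϕ₂ B))]

theorem stmt_12_general (K b0 T c ℓ : ℝ) (hc : 0 < c)
    (b b' : ℝ → ℝ)
    (hb : ∀ u ∈ Set.Icc (0 : ℝ) K, HasDerivAt b (b' u) u)
    (hb' : ∀ u ∈ Set.Icc (0 : ℝ) K, 0 ≤ b' u ∧ b' u ≤ b0)
    (τ τ' : ℝ → ℝ)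
    (hτ : ∀ u ∈ Set.Icc (0 : ℝ) K, HasDerivAt τ (τ' u) u)
    (hτ' : ∀ u ∈ Set.Icc (0 : ℝ) K, 0 ≤ τ' u ∧ τ' u ≤ T)
    (ϕ1 ϕ2 : ℝ → ℝ)
    (hϕ1r : ∀ ξ, ϕ1 ξ ∈ Set.Icc (0 : ℝ) K)
    (hϕ2r : ∀ ξ, ϕ2 ξ ∈ Set.Icc (0 : ℝ) K)
    (hle : ∀ ξ, ϕ2 ξ ≤ ϕ1 ξ)
    (hlip2 : ∀ ξ1 ξ2, c * |ϕ2 ξ1 - ϕ2 ξ2| ≤ ℓ * |ξ1 - ξ2|) :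
    ∀ ξ : ℝ,
      b (ϕ1 (ξ - c * τ (ϕ1 ξ))) - b (ϕ2 (ξ - c * τ (ϕ2 ξ))) ≥
        -(b0 * ℓ * T) * (ϕ1 ξ - ϕ2 ξ) := by
  have hb0 : 0 ≤ b0 := (hb' _ (hϕ1r 0)).1.trans (hb' _ (hϕ1r 0)).2
  have hℓ : 0 ≤ ℓ := by
    simpa using (mul_nonneg hc.le (abs_nonneg _)).trans (hlip2 1 0)
  have hs : Convex ℝ (Icc 0 K) := convex_Icc 0 K
  exact sub_comp_delay_ge hb0 hℓ hc
    (hs.monotoneOn_of_hasDerivAt_nonneg hb fun u hu => (hb' u hu).1)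
    (fun _ hx _ hy => hs.abs_image_sub_le_of_hasDerivAt_mem_Icc hb hb' hx hy)
    (fun _ hx _ hy => hs.abs_image_sub_le_of_hasDerivAt_mem_Icc hτ hτ' hx hy)
    hϕ1r hϕ2r hle hlip2

theorem stmt_12 (K b0 T c ℓ : ℝ) (hK : 0 < K) (hb0 : 0 < b0) (hT : 0 ≤ T) (hc : 0 < c)
    (b b' : ℝ → ℝ)
    (hb : ∀ u ∈ Set.Icc (0 : ℝ) K, HasDerivAt b (b' u) u)
    (hb' : ∀ u ∈ Set.Icc (0 : ℝ) K, 0 ≤ b' u ∧ b' u ≤ b0)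
    (τ τ' : ℝ → ℝ)
    (hτnn : ∀ u, 0 ≤ u → 0 ≤ τ u)
    (hτ : ∀ u ∈ Set.Icc (0 : ℝ) K, HasDerivAt τ (τ' u) u)
    (hτ' : ∀ u ∈ Set.Icc (0 : ℝ) K, 0 ≤ τ' u ∧ τ' u ≤ T)
    (ϕ1 ϕ2 : ℝ → ℝ)
    (hϕ1c : Continuous ϕ1) (hϕ2c : Continuous ϕ2)
    (hϕ1r : ∀ ξ, ϕ1 ξ ∈ Set.Icc (0 : ℝ) K)
    (hϕ2r : ∀ ξ, ϕ2 ξ ∈ Set.Icc (0 : ℝ) K)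
    (hle : ∀ ξ, ϕ2 ξ ≤ ϕ1 ξ)
    (hlip1 : ∀ ξ1 ξ2, c * |ϕ1 ξ1 - ϕ1 ξ2| ≤ ℓ * |ξ1 - ξ2|)
    (hlip2 : ∀ ξ1 ξ2, c * |ϕ2 ξ1 - ϕ2 ξ2| ≤ ℓ * |ξ1 - ξ2|) :
    ∀ ξ : ℝ,
      b (ϕ1 (ξ - c * τ (ϕ1 ξ))) - b (ϕ2 (ξ - c * τ (ϕ2 ξ))) ≥
        -(b0 * ℓ * T) * (ϕ1 ξ - ϕ2 ξ) :=
  stmt_12_general K b0 T c ℓ hc b b' hb hb' τ τ' hτ hτ' ϕ1 ϕ2 hϕ1r hϕ2r hle hlip2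
end

section
/- Let d > 0, b0 > d, m ≥ 0, and Λ(λ, c) = λ² − cλ − d + b0·e^{−λm}. Define c* = inf{ c > 0 : ∃ λ > 0, Λ(λ, c) ≤ 0 }. Then for every c > c*, there exists λ > 0 with Λ(λ, c) < 0, and for every c ∈ [0, c*), Λ(λ, c) > 0 for all λ ≥ 0. -/
/-!
Λ(λ, c) = g(λ) − cλ with g(λ) = λ² − d + b₀e^{−λm}, so for λ > 0 it is strictly decreasing
in c. Hence the set of speeds c > 0 at which Λ(·, c) is nonpositive somewhere on λ > 0 is an
upward-closed ray, nonempty because Λ(1, c) → −∞ as c → ∞. Above its infimum c* some speed of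
the set lies below c, which makes Λ strictly negative; below c* every λ > 0 gives Λ > 0, and at
λ = 0 one has Λ(0, c) = b₀ − d > 0.
-/

open Real

section

variable (g : ℝ → ℝ)

def nonposSpeeds : Set ℝ := {c | 0 < c ∧ ∃ l > 0, g l - c * l ≤ 0}

lemma nonposSpeeds_nonempty : (nonposSpeeds g).Nonempty :=
  ⟨max 1 (g 1), one_pos.trans_le (le_max_left _ _), 1, one_pos, by simp⟩

lemma nonposSpeeds_bddBelow : BddBelow (nonposSpeeds g) :=
  ⟨0, fun _ hc => hc.1.le⟩

lemma exists_neg_of_csInf_nonposSpeeds_lt {c : ℝ} (hc : sInf (nonposSpeeds g) < c) :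
    ∃ l > 0, g l - c * l < 0 := by
  obtain ⟨c₀, ⟨-, l, hl, hle⟩, hc₀⟩ := exists_lt_of_csInf_lt (nonposSpeeds_nonempty g) hc
  exact ⟨l, hl, by nlinarith⟩

lemma pos_of_lt_csInf_nonposSpeeds {c l : ℝ} (hc : 0 ≤ c) (hcs : c < sInf (nonposSpeeds g))
    (hl : 0 < l) : 0 < g l - c * l := by
  obtain ⟨c', hcc', hc's⟩ := exists_between hcs
  have hc' : c' ∉ nonposSpeeds g := fun h => (csInf_le (nonposSpeeds_bddBelow g) h).not_gt hc's
  have hpos : 0 < g l - c' * l := by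
    by_contra! h
    exact hc' ⟨hc.trans_lt hcc', l, hl, h⟩
  nlinarith

end

theorem stmt_19_general (d b0 m : ℝ) (hb0 : d < b0)
    (Λ : ℝ → ℝ → ℝ)
    (hΛ : ∀ l c, Λ l c = l ^ 2 - c * l - d + b0 * Real.exp (-l * m))
    (cstar : ℝ)
    (hcstar : cstar = sInf { c : ℝ | 0 < c ∧ ∃ l > 0, Λ l c ≤ 0 }) :
    (∀ c, cstar < c → ∃ l > 0, Λ l c < 0) ∧
    (∀ c, 0 ≤ c → c < cstar → ∀ l, 0 ≤ l → 0 < Λ l c) := by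
  set g : ℝ → ℝ := fun l => l ^ 2 - d + b0 * exp (-l * m)
  have hΛg : ∀ l c, Λ l c = g l - c * l := fun l c => by rw [hΛ]; ring
  have hcstar' : cstar = sInf (nonposSpeeds g) := by
    simp only [hcstar, nonposSpeeds, hΛg]
  subst hcstar'
  refine ⟨fun c hc => ?_, fun c hc₀ hc l hl => ?_⟩
  · simpa only [hΛg] using exists_neg_of_csInf_nonposSpeeds_lt g hc
  · rcases hl.eq_or_lt with rfl | hl
    · simpa [hΛ] using hb0
    · rw [hΛg]
      exact pos_of_lt_csInf_nonposSpeeds g hc₀ hc hl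

theorem stmt_19 (d b0 m : ℝ) (hd : 0 < d) (hb0 : d < b0) (hm : 0 ≤ m)
    (Λ : ℝ → ℝ → ℝ)
    (hΛ : ∀ l c, Λ l c = l ^ 2 - c * l - d + b0 * Real.exp (-l * m))
    (cstar : ℝ)
    (hcstar : cstar = sInf { c : ℝ | 0 < c ∧ ∃ l > 0, Λ l c ≤ 0 }) :
    (∀ c, cstar < c → ∃ l > 0, Λ l c < 0) ∧
    (∀ c, 0 ≤ c → c < cstar → ∀ l, 0 ≤ l → 0 < Λ l c) :=
  stmt_19_general d b0 m hb0 Λ hΛ cstar hcstar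
end
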